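/- Key step of Theorem 6.1: Let U be a non-principal ultrafilter on ω with a base B of cardinality strictly less than d, and let X ⊆ [ω]^ω be a set which is ≤_U-bounded by a single function g ∈ [ω]^ω. Then X is not d-unbounded; that is, there exists c ∈ [ω]^ω such that |{ x ∈ X : x ≤ c }| ≥ d, or equivalently X fails the d-unboundedness condition. Concretely: if for each b ∈ B one defines g_b := { g(n) : n ∈ b } (identified with its increasing enumeration), then no x ∈ X satisfies g_b ≤^∞ x for all b ∈ B. -/

import Mathlib

open Set Filter

/-- The increasing enumeration of a set of naturals. -/
noncomputable def enum (s : Set ℕ) : ℕ → ℕ := Nat.nth (· ∈ s)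

/-- The dominating number `𝔡`. -/
noncomputable def fd : Cardinal :=
  sInf { c : Cardinal | ∃ D : Set (ℕ → ℕ), Cardinal.mk D = c ∧
    ∀ f : ℕ → ℕ, ∃ g ∈ D, ∀ᶠ n in atTop, f n ≤ g n }

/-- `X ⊆ [ω]^ω` is `𝔡`-unbounded. -/
def DUnbounded (X : Set (Set ℕ)) : Prop :=
  fd ≤ Cardinal.mk X ∧ ∀ c : Set ℕ, c.Infinite →
    Cardinal.mk {x : Set ℕ | x ∈ X ∧ ∀ n, enum x n ≤ enum c n} < fd

/- ### Auxiliary machinery -/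

section Aux

lemma enum_strictMono {s : Set ℕ} (hs : s.Infinite) : StrictMono (enum s) :=
  Nat.nth_strictMono hs

lemma enum_mem {s : Set ℕ} (hs : s.Infinite) (n : ℕ) : enum s n ∈ s :=
  Nat.nth_mem_of_infinite hs n

lemma le_enum {s : Set ℕ} (hs : s.Infinite) (n : ℕ) : n ≤ enum s n :=
  (enum_strictMono hs).le_apply

lemma enum_image {f : ℕ → ℕ} (hf : StrictMono f) {s : Set ℕ} (hs : s.Infinite) :
    enum (f '' s) = f ∘ enum s := by
  have hinf : (f '' s).Infinite := hs.image hf.injective.injOn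
  have h1 : StrictMono (enum (f '' s)) := enum_strictMono hinf
  have h2 : StrictMono (f ∘ enum s) := hf.comp (enum_strictMono hs)
  rw [← StrictMono.range_inj h1 h2, Set.range_comp]
  have hr : Set.range (enum s) = s := Nat.range_nth_of_infinite hs
  have hr2 : Set.range (enum (f '' s)) = f '' s := Nat.range_nth_of_infinite hinf
  rw [hr, hr2]

lemma lt_enum_of_not_mem {s : Set ℕ} (hs : s.Infinite) {m : ℕ} (hm : m ∉ s)
    {k : ℕ} (hk : m ≤ k) : k < enum s k := by
  by_contra h
  push_neg at h
  -- then enum s j ≤ k for all j ≤ k, and enum s is injective, pigeonhole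
  have hmono := enum_strictMono hs
  have himg : (Finset.range (k + 1)).image (enum s) = Finset.range (k + 1) := by
    apply Finset.eq_of_subset_of_card_le
    · intro v hv
      simp only [Finset.mem_image, Finset.mem_range] at hv ⊢
      obtain ⟨j, hj, rfl⟩ := hv
      have : enum s j ≤ enum s k := hmono.monotone (by omega)
      omega
    · rw [Finset.card_image_of_injective _ hmono.injective]
  have hmmem : m ∈ (Finset.range (k + 1)).image (enum s) := by
    rw [himg]; simp; omega
  simp only [Finset.mem_image] at hmmem
  obtain ⟨j, _, hj⟩ := hmmem
  exact hm (hj ▸ enum_mem hs j)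

lemma mem_U_infinite (U : Ultrafilter ℕ) (hU : (↑U : Filter ℕ) ≤ Filter.cofinite)
    {s : Set ℕ} (hs : s ∈ U) : s.Infinite := by
  by_contra h
  rw [Set.not_infinite] at h
  have h2 : sᶜ ∈ U := hU (by rwa [Filter.mem_cofinite, compl_compl])
  have h3 : s ∩ sᶜ ∈ U := Filter.inter_mem hs h2
  rw [Set.inter_compl_self] at h3
  exact Ultrafilter.empty_notMem h3

/-- the basic chain estimate : if `b ⊆ {n | enum x n ≤ enum g n}` then
`enum x ≤ enum g ∘ enum b` pointwise. -/
lemma chain_le {x g b : Set ℕ} (hx : x.Infinite) (hb : b.Infinite)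
    (hsub : b ⊆ {n | enum x n ≤ enum g n}) (k : ℕ) :
    enum x k ≤ enum g (enum b k) := by
  have h1 : enum x k ≤ enum x (enum b k) :=
    (enum_strictMono hx).monotone (le_enum hb k)
  exact h1.trans (hsub (enum_mem hb k))

/-- `≤` modulo the ultrafilter `U`. -/
def ULE (U : Ultrafilter ℕ) (f h : ℕ → ℕ) : Prop := {n : ℕ | f n ≤ h n} ∈ U

lemma ULE_total (U : Ultrafilter ℕ) (f h : ℕ → ℕ) : ULE U f h ∨ ULE U h f := by
  rcases U.mem_or_compl_mem {n : ℕ | f n ≤ h n} with hm | hm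
  · exact Or.inl hm
  · right
    refine Filter.mem_of_superset hm ?_
    intro n hn
    simp only [Set.mem_compl_iff, Set.mem_setOf_eq, not_le] at hn ⊢
    omega

lemma ULE_trans (U : Ultrafilter ℕ) {f h k : ℕ → ℕ} (h1 : ULE U f h) (h2 : ULE U h k) :
    ULE U f k := by
  refine Filter.mem_of_superset (Filter.inter_mem h1 h2) ?_
  intro n hn
  simp only [Set.mem_inter_iff, Set.mem_setOf_eq] at hn ⊢
  omega

/-- `D` is a `U`-dominating family. -/
def UDomFam (U : Ultrafilter ℕ) (D : Set (ℕ → ℕ)) : Prop := ∀ f : ℕ → ℕ, ∃ d ∈ D, ULE U f d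

/-- The cofinality of the `U`-ultrapower ordering. -/
noncomputable def thetaU (U : Ultrafilter ℕ) : Cardinal :=
  sInf { c : Cardinal | ∃ D : Set (ℕ → ℕ), Cardinal.mk D = c ∧ UDomFam U D }

lemma thetaU_nonempty (U : Ultrafilter ℕ) :
    { c : Cardinal | ∃ D : Set (ℕ → ℕ), Cardinal.mk D = c ∧ UDomFam U D }.Nonempty := by
  refine ⟨_, Set.univ, rfl, fun f => ⟨f, Set.mem_univ f, ?_⟩⟩
  have : {n : ℕ | f n ≤ f n} = Set.univ := by ext n; simp
  rw [ULE, this]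
  exact Filter.univ_mem

lemma thetaU_mem (U : Ultrafilter ℕ) :
    ∃ D : Set (ℕ → ℕ), Cardinal.mk D = thetaU U ∧ UDomFam U D := by
  have := csInf_mem (thetaU_nonempty U)
  obtain ⟨D, hD, hdom⟩ := this
  exact ⟨D, hD, hdom⟩

lemma thetaU_le {U : Ultrafilter ℕ} {D : Set (ℕ → ℕ)} (hD : UDomFam U D) :
    thetaU U ≤ Cardinal.mk D :=
  csInf_le' ⟨D, rfl, hD⟩

lemma fd_nonempty :
    { c : Cardinal | ∃ D : Set (ℕ → ℕ), Cardinal.mk D = c ∧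
      ∀ f : ℕ → ℕ, ∃ g ∈ D, ∀ᶠ n in atTop, f n ≤ g n }.Nonempty :=
  ⟨_, Set.univ, rfl, fun f => ⟨f, Set.mem_univ f, Filter.Eventually.of_forall fun _ => le_rfl⟩⟩

lemma fd_mem : ∃ D : Set (ℕ → ℕ), Cardinal.mk D = fd ∧
    ∀ f : ℕ → ℕ, ∃ g ∈ D, ∀ᶠ n in atTop, f n ≤ g n := by
  have := csInf_mem fd_nonempty
  obtain ⟨D, hD, hdom⟩ := this
  exact ⟨D, hD, hdom⟩

lemma fd_le {D : Set (ℕ → ℕ)} (hD : ∀ f : ℕ → ℕ, ∃ g ∈ D, ∀ᶠ n in atTop, f n ≤ g n) :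
    fd ≤ Cardinal.mk D :=
  csInf_le' ⟨D, rfl, hD⟩

lemma aleph0_lt_fd : Cardinal.aleph0 < fd := by
  rw [lt_iff_not_ge]
  intro hle
  obtain ⟨D, hDcard, hdom⟩ := fd_mem
  have hcnt : Countable ↥D := by
    rw [← Cardinal.mk_le_aleph0_iff]
    exact hDcard.le.trans hle
  have hne : Nonempty ↥D := by
    obtain ⟨d, hd, _⟩ := hdom (fun _ => 0)
    exact ⟨⟨d, hd⟩⟩
  obtain ⟨e, he⟩ := exists_surjective_nat ↥D
  obtain ⟨d, hdD, hev⟩ := hdom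
    (fun n => (Finset.range (n + 1)).sup (fun i => (e i : ℕ → ℕ) n) + 1)
  obtain ⟨i₀, hi₀⟩ := he ⟨d, hdD⟩
  obtain ⟨N, hN⟩ := Filter.eventually_atTop.mp hev
  set n := max N i₀ with hn
  have h1 : (Finset.range (n + 1)).sup (fun i => (e i : ℕ → ℕ) n) + 1 ≤ d n :=
    hN n (le_max_left _ _)
  have h2 : d n ≤ (Finset.range (n + 1)).sup (fun i => (e i : ℕ → ℕ) n) := by
    have hi₀n : i₀ ∈ Finset.range (n + 1) := Finset.mem_range.mpr (by omega)
    have h3 : (e i₀ : ℕ → ℕ) n ≤ (Finset.range (n + 1)).sup (fun i => (e i : ℕ → ℕ) n) :=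
      Finset.le_sup (f := fun i => (e i : ℕ → ℕ) n) hi₀n
    rwa [hi₀] at h3
  omega

/-- An increasing majorant of `f`. -/
def maj (f : ℕ → ℕ) : ℕ → ℕ := fun n => (Finset.range (n + 1)).sup f

lemma maj_mono (f : ℕ → ℕ) : Monotone (maj f) := by
  intro a b hab
  exact Finset.sup_mono (Finset.range_subset_range.mpr (by omega))

lemma le_maj (f : ℕ → ℕ) (n : ℕ) : f n ≤ maj f n :=
  Finset.le_sup (Finset.mem_range.mpr (by omega))

lemma thetaU_eq_fd (U : Ultrafilter ℕ) (hU : (↑U : Filter ℕ) ≤ Filter.cofinite)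
    (B : Set (Set ℕ)) (hBmem : ∀ b ∈ B, b ∈ U) (hbase : ∀ u ∈ U, ∃ b ∈ B, b ⊆ u)
    (hBcard : Cardinal.mk B < fd) : thetaU U = fd := by
  -- θ ≤ fd since any dominating family is U-dominating
  obtain ⟨D₀, hD₀card, hD₀dom⟩ := fd_mem
  have hθle : thetaU U ≤ fd := by
    rw [← hD₀card]
    apply thetaU_le
    intro f
    obtain ⟨d, hd, hev⟩ := hD₀dom f
    refine ⟨d, hd, ?_⟩
    obtain ⟨N, hN⟩ := Filter.eventually_atTop.mp hev
    have : Set.Ici N ⊆ {n : ℕ | f n ≤ d n} := fun n hn => hN n hn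
    refine Filter.mem_of_superset (hU ?_) this
    rw [Filter.mem_cofinite]
    simpa using Set.finite_Iio N
  -- fd ≤ θ : cones over a U-dominating family give a dominating family of size θ * |B|
  rcases eq_or_lt_of_le hθle with h | hθlt
  · exact h
  exfalso
  obtain ⟨G, hGcard, hGdom⟩ := thetaU_mem U
  set D' : Set (ℕ → ℕ) :=
    Set.range (fun p : ↥G × ↥B => fun k => (p.1 : ℕ → ℕ) (enum (p.2 : Set ℕ) k)) with hD'
  have hdom' : ∀ f : ℕ → ℕ, ∃ d ∈ D', ∀ᶠ n in atTop, f n ≤ d n := by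
    intro f
    obtain ⟨g', hg'G, hg'⟩ := hGdom (maj f)
    obtain ⟨b, hbB, hbsub⟩ := hbase _ hg'
    have hbinf : b.Infinite := mem_U_infinite U hU (hBmem b hbB)
    refine ⟨_, ⟨(⟨g', hg'G⟩, ⟨b, hbB⟩), rfl⟩, Filter.Eventually.of_forall fun k => ?_⟩
    calc f k ≤ maj f k := le_maj f k
      _ ≤ maj f (enum b k) := maj_mono f (le_enum hbinf k)
      _ ≤ g' (enum b k) := hbsub (enum_mem hbinf k)
  have h1 : fd ≤ Cardinal.mk D' := fd_le hdom'
  have h2 : Cardinal.mk D' ≤ Cardinal.mk (↥G × ↥B) := Cardinal.mk_range_le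
  have h3 : Cardinal.mk (↥G × ↥B) = Cardinal.mk ↥G * Cardinal.mk ↥B := by
    rw [Cardinal.mk_prod, Cardinal.lift_id, Cardinal.lift_id]
  have h4 : Cardinal.mk ↥G * Cardinal.mk ↥B < fd := by
    apply Cardinal.mul_lt_of_lt aleph0_lt_fd.le
    · rw [hGcard]; exact hθlt
    · exact hBcard
  exact absurd ((h1.trans h2).trans_eq h3) (not_le.mpr h4)

end Aux

/-- Key step of Theorem 6.1: if `U` is a non-principal ultrafilter with a base `B` of
size `< 𝔡` and `X ⊆ [ω]^ω` is `≤_U`-bounded by `g`, then `X` is not `𝔡`-unbounded;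
concretely, no `x ∈ X` satisfies `g_b ≤^∞ x` for all `b ∈ B`, where
`g_b = { g(n) : n ∈ b }` is identified with its increasing enumeration. -/
theorem stmt8 (U : Ultrafilter ℕ) (hU : (↑U : Filter ℕ) ≤ Filter.cofinite)
    (B : Set (Set ℕ)) (hBmem : ∀ b ∈ B, b ∈ U) (hbase : ∀ u ∈ U, ∃ b ∈ B, b ⊆ u)
    (hBcard : Cardinal.mk B < fd)
    (g : Set ℕ) (hg : g.Infinite)
    (X : Set (Set ℕ)) (hXinf : ∀ x ∈ X, x.Infinite)
    (hbd : ∀ x ∈ X, {n : ℕ | enum x n ≤ enum g n} ∈ U) :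
    ¬ DUnbounded X ∧
    ∀ x ∈ X, ¬ (∀ b ∈ B, {k : ℕ | enum (enum g '' b) k ≤ enum x k}.Infinite) := by
  have hgmono : StrictMono (enum g) := enum_strictMono hg
  -- For every x ∈ X there is b ∈ B with enum x ≤ enum (enum g '' b) pointwise.
  have hcover : ∀ x ∈ X, ∃ b ∈ B, ∀ k, enum x k ≤ enum (enum g '' b) k := by
    intro x hx
    obtain ⟨b, hbB, hbsub⟩ := hbase _ (hbd x hx)
    have hbinf : b.Infinite := mem_U_infinite U hU (hBmem b hbB)
    refine ⟨b, hbB, fun k => ?_⟩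
    rw [enum_image hgmono hbinf]
    exact chain_le (hXinf x hx) hbinf hbsub k
  constructor
  · -- ¬ DUnbounded X
    rintro ⟨h1, h2⟩
    have hθ : thetaU U = fd := thetaU_eq_fd U hU B hBmem hbase hBcard
    obtain ⟨G, hGcard, hGdom⟩ := thetaU_mem U
    -- embed G into X
    have hGX : Cardinal.mk ↥G ≤ Cardinal.mk ↥X := by
      rw [hGcard, hθ]; exact h1
    obtain ⟨ψ⟩ := (Cardinal.le_def ↥G ↥X).mp hGX
    -- the pieces of G indexed by b ∈ B
    set Gpiece : ↥B → Set (ℕ → ℕ) := fun i =>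
      {f : ℕ → ℕ | ∃ hf : f ∈ G,
        (↑(ψ ⟨f, hf⟩) : Set ℕ) ∈ X ∧
        ∀ n, enum (↑(ψ ⟨f, hf⟩) : Set ℕ) n ≤ enum (enum g '' (i : Set ℕ)) n} with hGp
    have hpiece_small : ∀ i : ↥B, Cardinal.mk ↥(Gpiece i) < fd := by
      intro i
      have hiinf : ((i : Set ℕ)).Infinite := mem_U_infinite U hU (hBmem _ i.2)
      have hciinf : (enum g '' (i : Set ℕ)).Infinite := hiinf.image hgmono.injective.injOn
      have hle : Cardinal.mk ↥(Gpiece i) ≤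
          Cardinal.mk ↥{x : Set ℕ | x ∈ X ∧ ∀ n, enum x n ≤ enum (enum g '' (i : Set ℕ)) n} := by
        apply Cardinal.mk_le_of_injective
          (f := fun p => ⟨(↑(ψ ⟨p.1, p.2.choose⟩) : Set ℕ),
            ⟨p.2.choose_spec.1, p.2.choose_spec.2⟩⟩)
        intro p q hpq
        simp only [Subtype.mk.injEq] at hpq
        have h5 : ψ ⟨p.1, p.2.choose⟩ = ψ ⟨q.1, q.2.choose⟩ := Subtype.ext hpq
        have h6 := ψ.injective h5
        have h7 := congrArg (fun z : ↥G => (z : ℕ → ℕ)) h6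
        exact Subtype.ext h7
      exact lt_of_le_of_lt hle (h2 _ hciinf)
    -- each piece fails to be U-dominating, pick witnesses
    have hwit : ∀ i : ↥B, ∃ f : ℕ → ℕ, ∀ d ∈ Gpiece i, ¬ ULE U f d := by
      intro i
      by_contra hcon
      push_neg at hcon
      have : UDomFam U (Gpiece i) := by
        intro f
        obtain ⟨d, hd, hle⟩ := hcon f
        exact ⟨d, hd, hle⟩
      have := thetaU_le this
      rw [hθ] at this
      exact absurd this (not_le.mpr (hpiece_small i))
    choose wit hwit' using hwit
    -- the witnesses form a U-dominating family of size < θ, contradiction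
    have hFdom : UDomFam U (Set.range wit) := by
      intro h
      obtain ⟨g', hg'G, hg'⟩ := hGdom h
      obtain ⟨b, hbB, hble⟩ := hcover (↑(ψ ⟨g', hg'G⟩)) (ψ ⟨g', hg'G⟩).2
      set i : ↥B := ⟨b, hbB⟩ with hi
      have hg'mem : g' ∈ Gpiece i := ⟨hg'G, (ψ ⟨g', hg'G⟩).2, hble⟩
      have h7 : ULE U g' (wit i) := by
        rcases ULE_total U (wit i) g' with h | h
        · exact absurd h (hwit' i g' hg'mem)
        · exact h
      exact ⟨wit i, ⟨i, rfl⟩, ULE_trans U hg' h7⟩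
    have h8 : thetaU U ≤ Cardinal.mk ↥(Set.range wit) := thetaU_le hFdom
    have h9 : Cardinal.mk ↥(Set.range wit) ≤ Cardinal.mk ↥B := Cardinal.mk_range_le
    rw [hθ] at h8
    exact absurd (h8.trans h9) (not_le.mpr hBcard)
  · -- the concrete statement
    intro x hx hall
    have hxinf := hXinf x hx
    -- pick a co-infinite u ∈ U
    have heven : {n : ℕ | Even n}.Infinite := by
      have hinj : Function.Injective (fun n : ℕ => 2 * n) := fun a b hab => by
        have h : 2 * a = 2 * b := hab
        omega
      refine Set.infinite_of_injective_forall_mem hinj fun a => ?_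
      show Even (2 * a)
      exact ⟨a, by omega⟩
    have hodd : ({n : ℕ | Even n}ᶜ).Infinite := by
      have hinj : Function.Injective (fun n : ℕ => 2 * n + 1) := fun a b hab => by
        have h : 2 * a + 1 = 2 * b + 1 := hab
        omega
      refine Set.infinite_of_injective_forall_mem hinj fun a => ?_
      show ¬ Even (2 * a + 1)
      rw [Nat.even_iff]
      omega
    obtain ⟨u, huU, hucoinf⟩ : ∃ u ∈ U, (uᶜ : Set ℕ).Infinite := by
      rcases U.mem_or_compl_mem {n : ℕ | Even n} with h | h
      · exact ⟨_, h, hodd⟩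
      · exact ⟨_, h, by rwa [compl_compl]⟩
    obtain ⟨b, hbB, hbsub⟩ := hbase _ (Filter.inter_mem (hbd x hx) huU)
    have hbinf : b.Infinite := mem_U_infinite U hU (hBmem b hbB)
    obtain ⟨m, hm⟩ := hucoinf.nonempty
    have hmb : m ∉ b := fun hmem => hm (hbsub hmem).2
    have hfin : {k : ℕ | enum (enum g '' b) k ≤ enum x k} ⊆ {k : ℕ | k < m} := by
      intro k hk
      simp only [Set.mem_setOf_eq] at hk ⊢
      by_contra hge
      push_neg at hge
      have h1 : k < enum b k := lt_enum_of_not_mem hbinf hmb hge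
      have h2 : enum x k < enum x (enum b k) := enum_strictMono hxinf h1
      have h3 : enum x (enum b k) ≤ enum g (enum b k) := (hbsub (enum_mem hbinf k)).1
      have h4 : enum (enum g '' b) k = enum g (enum b k) := by
        rw [enum_image hgmono hbinf]; rfl
      omega
    exact (((Set.finite_Iio m).subset hfin).not_infinite) (hall b hbB)
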